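/- arXiv:2601.11922 — 3 statements merged into one kernel-verified Lean document; each statement's English description precedes it below -/
import Mathlib

section
/- Let u:[0,T]→ℝ be continuous, and suppose u is C² on [0,γ] and on [γ,T] for some γ∈(0,T), with one-sided derivatives ∂⁺u(γ) and ∂⁻u(γ) at γ. If τ < γ < τ+Δt with Δt>0, then u(τ+Δt) − u(τ) − Δt·u'(τ⁻ side derivative) = (1−κ)Δt(∂⁺u(γ) − ∂⁻u(γ)) + O(Δt²), where κ = (γ−τ)/Δt ∈ (0,1). In particular the error is of first order in Δt with coefficient proportional to the jump in the time derivative. -/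
/-!
On each side of the breakpoint `γ` the solution is the restriction of a `C²` function, so the
first-order Taylor remainders of `u₁` on `[τ, γ]` and of `u₂` on `[γ, τ + Δt]` are `O(Δt²)`.
Since `u₁ γ = u₂ γ`, the Euler residual `u (τ + Δt) - u τ - Δt u₁'(τ)` is the sum of these two
remainders, of the first-order jump term `(τ + Δt - γ) (u₂'(γ) - u₁'(γ))`, and of
`(τ + Δt - γ) (u₁'(γ) - u₁'(τ))`, which is again `O(Δt²)` because `u₁'` is Lipschitz.
-/

open Set

section Taylor

variable {f : ℝ → ℝ} {x y K M : ℝ}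

theorem abs_sub_sub_mul_deriv_le_of_abs_deriv_sub_le (hf : Differentiable ℝ f) (hxy : x ≤ y)
    (hK : ∀ t ∈ Ico x y, |deriv f t - deriv f x| ≤ K) :
    |f y - f x - (y - x) * deriv f x| ≤ K * (y - x) := by
  have hg (t : ℝ) : HasDerivAt (fun s => f s - s * deriv f x) (deriv f t - deriv f x) t := by
    simpa only [one_mul] using (hf t).hasDerivAt.fun_sub ((hasDerivAt_id' t).mul_const (deriv f x))
  have hmvt := norm_image_sub_le_of_norm_deriv_le_segment' (fun t _ => (hg t).hasDerivWithinAt) hK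
    y (right_mem_Icc.2 hxy)
  rw [Real.norm_eq_abs] at hmvt
  convert hmvt using 2
  ring

theorem abs_deriv_sub_deriv_le (hf' : Differentiable ℝ (deriv f))
    (hM : ∀ t ∈ Icc x y, |deriv (deriv f) t| ≤ M) :
    ∀ t ∈ Icc x y, |deriv f t - deriv f x| ≤ M * (t - x) :=
  norm_image_sub_le_of_norm_deriv_le_segment' (fun t _ => (hf' t).hasDerivAt.hasDerivWithinAt)
    (fun t ht => hM t (Ico_subset_Icc_self ht))

theorem abs_sub_sub_mul_deriv_le_of_abs_deriv_deriv_le (hf : Differentiable ℝ f)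
    (hf' : Differentiable ℝ (deriv f)) (hxy : x ≤ y)
    (hM : ∀ t ∈ Icc x y, |deriv (deriv f) t| ≤ M) :
    |f y - f x - (y - x) * deriv f x| ≤ M * (y - x) ^ 2 := by
  have hM₀ : 0 ≤ M := (abs_nonneg _).trans (hM x (left_mem_Icc.2 hxy))
  have hK : ∀ t ∈ Ico x y, |deriv f t - deriv f x| ≤ M * (y - x) := fun t ht =>
    (abs_deriv_sub_deriv_le hf' hM t (Ico_subset_Icc_self ht)).trans
      (mul_le_mul_of_nonneg_left (by linarith [ht.2]) hM₀)
  calc |f y - f x - (y - x) * deriv f x| ≤ M * (y - x) * (y - x) :=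
        abs_sub_sub_mul_deriv_le_of_abs_deriv_sub_le hf hxy hK
    _ = M * (y - x) ^ 2 := by ring

end Taylor

theorem abs_euler_residual_across_breakpoint_le {f₁ f₂ : ℝ → ℝ} {x c y M₁ M₂ : ℝ}
    (hf₁ : Differentiable ℝ f₁) (hf₁' : Differentiable ℝ (deriv f₁))
    (hf₂ : Differentiable ℝ f₂) (hf₂' : Differentiable ℝ (deriv f₂))
    (hxc : x ≤ c) (hcy : c ≤ y) (hc : f₁ c = f₂ c)
    (hM₁ : ∀ t ∈ Icc x c, |deriv (deriv f₁) t| ≤ M₁)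
    (hM₂ : ∀ t ∈ Icc c y, |deriv (deriv f₂) t| ≤ M₂) :
    |f₂ y - f₁ x - (y - x) * deriv f₁ x - (y - c) * (deriv f₂ c - deriv f₁ c)|
      ≤ (M₁ + M₂) * (y - x) ^ 2 := by
  have hM₁₀ : 0 ≤ M₁ := (abs_nonneg _).trans (hM₁ x (left_mem_Icc.2 hxc))
  have hM₂₀ : 0 ≤ M₂ := (abs_nonneg _).trans (hM₂ c (left_mem_Icc.2 hcy))
  have hR₁ := abs_sub_sub_mul_deriv_le_of_abs_deriv_deriv_le hf₁ hf₁' hxc hM₁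
  have hR₂ := abs_sub_sub_mul_deriv_le_of_abs_deriv_deriv_le hf₂ hf₂' hcy hM₂
  have hL : |(y - c) * (deriv f₁ c - deriv f₁ x)| ≤ (y - c) * (M₁ * (c - x)) := by
    rw [abs_mul, abs_of_nonneg (sub_nonneg.2 hcy)]
    exact mul_le_mul_of_nonneg_left (abs_deriv_sub_deriv_le hf₁' hM₁ c (right_mem_Icc.2 hxc))
      (sub_nonneg.2 hcy)
  have hsplit : f₂ y - f₁ x - (y - x) * deriv f₁ x - (y - c) * (deriv f₂ c - deriv f₁ c)
      = (f₂ y - f₂ c - (y - c) * deriv f₂ c) + (f₁ c - f₁ x - (c - x) * deriv f₁ x)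
        + (y - c) * (deriv f₁ c - deriv f₁ x) := by
    rw [hc]; ring
  calc _ ≤ M₂ * (y - c) ^ 2 + M₁ * (c - x) ^ 2 + (y - c) * (M₁ * (c - x)) := by
        rw [hsplit]
        exact (abs_add_three _ _ _).trans (add_le_add (add_le_add hR₂ hR₁) hL)
    _ ≤ (M₁ + M₂) * (y - x) ^ 2 := by
        have hcx : 0 ≤ c - x := sub_nonneg.2 hxc
        have hyc : 0 ≤ y - c := sub_nonneg.2 hcy
        nlinarith [mul_nonneg hM₁₀ (mul_nonneg hcx hyc), mul_nonneg hM₂₀ (mul_nonneg hcx hyc),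
          mul_nonneg hM₂₀ (sq_nonneg (c - x)), mul_nonneg hM₁₀ (sq_nonneg (y - c))]

theorem ContDiff.exists_abs_deriv_deriv_le_on_Icc {f : ℝ → ℝ} (hf : ContDiff ℝ 2 f) (a b : ℝ) :
    ∃ M, ∀ t ∈ Icc a b, |deriv (deriv f) t| ≤ M := by
  have hcont : Continuous (deriv (deriv f)) := by
    simpa [iteratedDeriv_succ, iteratedDeriv_one] using hf.continuous_iteratedDeriv 2 le_rfl
  exact isCompact_Icc.exists_bound_of_continuousOn hcont.continuousOn

theorem stmt0_general (T γ : ℝ)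
    (u u₁ u₂ : ℝ → ℝ)
    (hu₁ : ContDiff ℝ 2 u₁) (hu₂ : ContDiff ℝ 2 u₂)
    (h1 : ∀ t ∈ Set.Icc (0:ℝ) γ, u t = u₁ t)
    (h2 : ∀ t ∈ Set.Icc γ T, u t = u₂ t) :
    ∃ C : ℝ, ∀ τ Δt : ℝ, 0 < Δt → 0 ≤ τ → τ < γ → γ < τ + Δt → τ + Δt ≤ T →
      |u (τ + Δt) - u τ - Δt * deriv u₁ τ -
        (1 - (γ - τ) / Δt) * Δt * (deriv u₂ γ - deriv u₁ γ)| ≤ C * Δt ^ 2 := by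
  obtain ⟨M₁, hM₁⟩ := hu₁.exists_abs_deriv_deriv_le_on_Icc 0 γ
  obtain ⟨M₂, hM₂⟩ := hu₂.exists_abs_deriv_deriv_le_on_Icc γ T
  refine ⟨M₁ + M₂, fun τ Δt hΔt hτ hτγ hγτ hT => ?_⟩
  have hγ : u₁ γ = u₂ γ := by
    rw [← h1 γ ⟨hτ.trans hτγ.le, le_rfl⟩, h2 γ ⟨le_rfl, hγτ.le.trans hT⟩]
  have hweight : (1 - (γ - τ) / Δt) * Δt = τ + Δt - γ := by field_simp; ring
  have hres := abs_euler_residual_across_breakpoint_le (hu₁.differentiable two_ne_zero)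
    hu₁.differentiable_deriv_two (hu₂.differentiable two_ne_zero) hu₂.differentiable_deriv_two
    hτγ.le hγτ.le hγ (fun t ht => hM₁ t ⟨hτ.trans ht.1, ht.2⟩)
    (fun t ht => hM₂ t ⟨ht.1, ht.2.trans hT⟩)
  rw [h1 τ ⟨hτ, hτγ.le⟩, h2 (τ + Δt) ⟨hγτ.le, hT⟩, hweight]
  rwa [add_sub_cancel_left] at hres

/-- one-step Euler truncation error across a phase boundary.
`u` agrees with a `C²` function `u₁` on `[0,γ]` and with a `C²` function `u₂` on `[γ,T]`.
For a step `τ < γ < τ+Δt`, the forward-Euler residual (using the left-regime derivative)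
equals `(1-κ)Δt (∂⁺u(γ) - ∂⁻u(γ))` up to an `O(Δt²)` error, `κ = (γ-τ)/Δt`. -/
theorem stmt0 (T γ : ℝ) (hγ0 : 0 < γ) (hγT : γ < T)
    (u u₁ u₂ : ℝ → ℝ)
    (hu₁ : ContDiff ℝ 2 u₁) (hu₂ : ContDiff ℝ 2 u₂)
    (h1 : ∀ t ∈ Set.Icc (0:ℝ) γ, u t = u₁ t)
    (h2 : ∀ t ∈ Set.Icc γ T, u t = u₂ t) :
    ∃ C : ℝ, ∀ τ Δt : ℝ, 0 < Δt → 0 ≤ τ → τ < γ → γ < τ + Δt → τ + Δt ≤ T →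
      |u (τ + Δt) - u τ - Δt * deriv u₁ τ -
        (1 - (γ - τ) / Δt) * Δt * (deriv u₂ γ - deriv u₁ γ)| ≤ C * Δt ^ 2 :=
  stmt0_general T γ u u₁ u₂ hu₁ hu₂ h1 h2
end

section
/- With the setup of the previous piecewise-constant sequence (e_j = a for j < m*, e_j = b for j ≥ m*, a ≠ b): for m < m* one has A_m = a and B_m = ((m*−m)a + (M−m*+1)b)/(M−m+1), so that |A_m − B_m| = |a−b|·(M−m*+1)/(M−m+1), which is strictly increasing in m on {m₀,…,m*}. Symmetrically, for m > m*, |A_m − B_m| = |a−b|·m*/m, strictly decreasing in m. Consequently the weighted statistic C(m) = m(1−m/(M+1))(A_m−B_m)² attains its unique maximum over {m₀,…,M−m₀} at m = m*, provided m₀ ≤ m* ≤ M−m₀. -/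
/-!
Left of the change point `k` the prefix mean is `a` and the suffix mean is a convex combination
of `a` and `b`, giving the gap `(a - b)(M + 1 - k)/(M + 1 - m)`; right of it the gap is
`(a - b) k / m`. Multiplying the squared gap by the weight `m (M + 1 - m)/(M + 1)` and comparing
with the value `(a - b)² k (M + 1 - k)/(M + 1)` at `k` reduces, on either side, to `m < k`
resp. `k < m`.
-/

open Finset

noncomputable def prefixMean (e : ℕ → ℝ) (m : ℕ) : ℝ :=
  (1 / (m : ℝ)) * ∑ j ∈ range m, e j

noncomputable def suffixMean (e : ℕ → ℝ) (M m : ℕ) : ℝ :=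
  (1 / ((M : ℝ) - m + 1)) * ∑ j ∈ Icc m M, e j

noncomputable def cusum (e : ℕ → ℝ) (M m : ℕ) : ℝ :=
  (m : ℝ) * (1 - (m : ℝ) / ((M : ℝ) + 1)) * (prefixMean e m - suffixMean e M m) ^ 2

def IsStepAt (e : ℕ → ℝ) (k : ℕ) (a b : ℝ) : Prop :=
  (∀ j, j < k → e j = a) ∧ ∀ j, k ≤ j → e j = b

theorem sum_Ico_eq_of_forall_eq {e : ℕ → ℝ} {c : ℝ} {p q : ℕ} (hpq : p ≤ q)
    (h : ∀ j ∈ Ico p q, e j = c) : ∑ j ∈ Ico p q, e j = ((q : ℝ) - p) * c := by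
  rw [sum_congr rfl h, sum_const, Nat.card_Ico, nsmul_eq_mul, Nat.cast_sub hpq]

namespace IsStepAt

variable {e : ℕ → ℝ} {k M m p q : ℕ} {a b : ℝ}

theorem sum_Ico_of_le_of_le (he : IsStepAt e k a b) (hp : p ≤ k) (hq : k ≤ q) :
    ∑ j ∈ Ico p q, e j = ((k : ℝ) - p) * a + ((q : ℝ) - k) * b := by
  rw [← sum_Ico_consecutive _ hp hq,
    sum_Ico_eq_of_forall_eq hp fun j hj => he.1 j (mem_Ico.mp hj).2,
    sum_Ico_eq_of_forall_eq hq fun j hj => he.2 j (mem_Ico.mp hj).1]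

theorem sum_range_of_le (he : IsStepAt e k a b) (hm : m ≤ k) :
    ∑ j ∈ range m, e j = (m : ℝ) * a := by
  rw [range_eq_Ico, sum_Ico_eq_of_forall_eq m.zero_le fun j hj => he.1 j (by grind),
    Nat.cast_zero, sub_zero]

theorem sum_range_of_ge (he : IsStepAt e k a b) (hm : k ≤ m) :
    ∑ j ∈ range m, e j = (k : ℝ) * a + ((m : ℝ) - k) * b := by
  rw [range_eq_Ico, he.sum_Ico_of_le_of_le k.zero_le hm, Nat.cast_zero, sub_zero]

theorem sum_Icc_of_le (he : IsStepAt e k a b) (hm : m ≤ k) (hk : k ≤ M + 1) :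
    ∑ j ∈ Icc m M, e j = ((k : ℝ) - m) * a + ((M : ℝ) - k + 1) * b := by
  rw [← Ico_add_one_right_eq_Icc, he.sum_Ico_of_le_of_le hm hk]
  push_cast
  ring

theorem sum_Icc_of_ge (he : IsStepAt e k a b) (hm : k ≤ m) (hmM : m ≤ M + 1) :
    ∑ j ∈ Icc m M, e j = ((M : ℝ) - m + 1) * b := by
  rw [← Ico_add_one_right_eq_Icc,
    sum_Ico_eq_of_forall_eq hmM fun j hj => he.2 j (hm.trans (mem_Ico.mp hj).1)]
  push_cast
  ring

theorem prefixMean_of_le (he : IsStepAt e k a b) (hm₁ : 1 ≤ m) (hm : m ≤ k) :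
    prefixMean e m = a := by
  have hm₀ : (m : ℝ) ≠ 0 := by exact_mod_cast (by omega : m ≠ 0)
  rw [prefixMean, he.sum_range_of_le hm]
  field_simp

theorem suffixMean_of_le (he : IsStepAt e k a b) (hm : m ≤ k) (hk : k ≤ M + 1) :
    suffixMean e M m = (((k : ℝ) - m) * a + ((M : ℝ) - k + 1) * b) / ((M : ℝ) - m + 1) := by
  rw [suffixMean, he.sum_Icc_of_le hm hk, one_div_mul_eq_div]

theorem prefixMean_sub_suffixMean_of_le (he : IsStepAt e k a b) (hm₁ : 1 ≤ m) (hm : m ≤ k)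
    (hk : k ≤ M) :
    prefixMean e m - suffixMean e M m = (a - b) * ((M : ℝ) - k + 1) / ((M : ℝ) - m + 1) := by
  have hmM : (m : ℝ) ≤ M := by exact_mod_cast hm.trans hk
  have hd : (M : ℝ) - m + 1 ≠ 0 := by linarith
  rw [he.prefixMean_of_le hm₁ hm, he.suffixMean_of_le hm (by omega)]
  field_simp
  ring

theorem prefixMean_sub_suffixMean_of_ge (he : IsStepAt e k a b) (hm₁ : 1 ≤ m) (hm : k ≤ m)
    (hmM : m ≤ M) :
    prefixMean e m - suffixMean e M m = (a - b) * (k : ℝ) / (m : ℝ) := by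
  have hm₀ : (m : ℝ) ≠ 0 := by exact_mod_cast (by omega : m ≠ 0)
  have hmM' : (m : ℝ) ≤ M := by exact_mod_cast hmM
  have hd : (M : ℝ) - m + 1 ≠ 0 := by linarith
  rw [prefixMean, suffixMean, he.sum_range_of_ge hm, he.sum_Icc_of_ge hm (by omega)]
  field_simp
  ring

theorem abs_prefixMean_sub_suffixMean_of_le (he : IsStepAt e k a b) (hm₁ : 1 ≤ m) (hm : m ≤ k)
    (hk : k ≤ M) :
    |prefixMean e m - suffixMean e M m| =
      |a - b| * ((M : ℝ) - k + 1) / ((M : ℝ) - m + 1) := by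
  have hkM : (k : ℝ) ≤ M := by exact_mod_cast hk
  have hmk : (m : ℝ) ≤ k := by exact_mod_cast hm
  rw [he.prefixMean_sub_suffixMean_of_le hm₁ hm hk, abs_div, abs_mul,
    abs_of_pos (by linarith : (0 : ℝ) < M - k + 1), abs_of_pos (by linarith : (0 : ℝ) < M - m + 1)]

theorem abs_prefixMean_sub_suffixMean_of_ge (he : IsStepAt e k a b) (hm₁ : 1 ≤ m) (hm : k ≤ m)
    (hmM : m ≤ M) :
    |prefixMean e m - suffixMean e M m| = |a - b| * (k : ℝ) / (m : ℝ) := by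
  rw [he.prefixMean_sub_suffixMean_of_ge hm₁ hm hmM, abs_div, abs_mul, Nat.abs_cast,
    Nat.abs_cast]

theorem strictMonoOn_abs_prefixMean_sub_suffixMean (he : IsStepAt e k a b) (hab : a ≠ b)
    (hk : k ≤ M) :
    StrictMonoOn (fun m => |prefixMean e m - suffixMean e M m|) (Set.Icc 1 k) := by
  intro m ⟨hm₁, hm⟩ m' ⟨hm₁', hm'⟩ hmm'
  have hkM : (k : ℝ) ≤ M := by exact_mod_cast hk
  have hm'k : (m' : ℝ) ≤ k := by exact_mod_cast hm'
  have hmm'' : (m : ℝ) < m' := by exact_mod_cast hmm'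
  simp only [he.abs_prefixMean_sub_suffixMean_of_le hm₁ hm hk,
    he.abs_prefixMean_sub_suffixMean_of_le hm₁' hm' hk]
  exact div_lt_div_of_pos_left (mul_pos (abs_pos.mpr (sub_ne_zero.mpr hab)) (by linarith))
    (by linarith) (by linarith)

theorem strictAntiOn_abs_prefixMean_sub_suffixMean (he : IsStepAt e k a b) (hab : a ≠ b)
    (hk : 1 ≤ k) :
    StrictAntiOn (fun m => |prefixMean e m - suffixMean e M m|) (Set.Icc k M) := by
  intro m ⟨hm, hmM⟩ m' ⟨hm', hm'M⟩ hmm'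
  simp only [he.abs_prefixMean_sub_suffixMean_of_ge (hk.trans hm) hm hmM,
    he.abs_prefixMean_sub_suffixMean_of_ge (hk.trans hm') hm' hm'M]
  exact div_lt_div_of_pos_left (mul_pos (abs_pos.mpr (sub_ne_zero.mpr hab)) (by exact_mod_cast hk))
    (by exact_mod_cast hk.trans hm) (by exact_mod_cast hmm')

theorem cusum_of_le (he : IsStepAt e k a b) (hm₁ : 1 ≤ m) (hm : m ≤ k) (hk : k ≤ M) :
    cusum e M m =
      (a - b) ^ 2 * ((M : ℝ) + 1 - k) ^ 2 * m / (((M : ℝ) + 1) * ((M : ℝ) + 1 - m)) := by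
  have hmM : (m : ℝ) ≤ M := by exact_mod_cast hm.trans hk
  have hd : (M : ℝ) - m + 1 ≠ 0 := by linarith
  have hd' : (M : ℝ) + 1 - m ≠ 0 := by linarith
  rw [cusum, he.prefixMean_sub_suffixMean_of_le hm₁ hm hk]
  field_simp
  ring

theorem cusum_of_ge (he : IsStepAt e k a b) (hm₁ : 1 ≤ m) (hm : k ≤ m) (hmM : m ≤ M) :
    cusum e M m = (a - b) ^ 2 * (k : ℝ) ^ 2 * ((M : ℝ) + 1 - m) / (((M : ℝ) + 1) * m) := by
  have hm₀ : (m : ℝ) ≠ 0 := by exact_mod_cast (by omega : m ≠ 0)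
  rw [cusum, he.prefixMean_sub_suffixMean_of_ge hm₁ hm hmM]
  field_simp

theorem cusum_lt_cusum_of_ne (he : IsStepAt e k a b) (hab : a ≠ b) (hk₁ : 1 ≤ k) (hk : k ≤ M)
    (hm₁ : 1 ≤ m) (hmM : m ≤ M) (hmk : m ≠ k) : cusum e M m < cusum e M k := by
  have hK : (0 : ℝ) < (a - b) ^ 2 := by have := sub_ne_zero.mpr hab; positivity
  have hkM : (k : ℝ) ≤ M := by exact_mod_cast hk
  have hmM' : (m : ℝ) ≤ M := by exact_mod_cast hmM
  have hk₀ : (0 : ℝ) < k := by exact_mod_cast hk₁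
  have hm₀ : (0 : ℝ) < m := by exact_mod_cast hm₁
  rcases hmk.lt_or_gt with hlt | hgt
  · have hmk' : (m : ℝ) < k := by exact_mod_cast hlt
    rw [he.cusum_of_le hm₁ hlt.le hk, he.cusum_of_ge hk₁ le_rfl hk,
      div_lt_div_iff₀ (by nlinarith) (by nlinarith)]
    have : ((M : ℝ) + 1 - k) * m < k * ((M : ℝ) + 1 - m) := by nlinarith
    have hc : (0 : ℝ) < (a - b) ^ 2 * ((M : ℝ) + 1 - k) * (M + 1) := by
      have : (0 : ℝ) < M + 1 - k := by linarith
      positivity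
    nlinarith [mul_lt_mul_of_pos_left this hc]
  · have hkm' : (k : ℝ) < m := by exact_mod_cast hgt
    rw [he.cusum_of_ge hm₁ hgt.le hmM, he.cusum_of_ge hk₁ le_rfl hk,
      div_lt_div_iff₀ (by positivity) (by positivity)]
    have : (k : ℝ) * ((M : ℝ) + 1 - m) < ((M : ℝ) + 1 - k) * m := by nlinarith
    have hc : (0 : ℝ) < (a - b) ^ 2 * k * (M + 1) := by positivity
    nlinarith [mul_lt_mul_of_pos_left this hc]

end IsStepAt

theorem stmt5_general (M m₀ mstar : ℕ) (a b : ℝ) (hab : a ≠ b)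
    (h1 : 1 ≤ m₀) (h2 : m₀ ≤ mstar) (h3 : mstar ≤ M - m₀)
    (e A B C : ℕ → ℝ)
    (he1 : ∀ j, j < mstar → e j = a) (he2 : ∀ j, mstar ≤ j → e j = b)
    (hA : ∀ m, A m = (1 / (m : ℝ)) * ∑ j ∈ Finset.range m, e j)
    (hB : ∀ m, B m = (1 / ((M : ℝ) - m + 1)) * ∑ j ∈ Finset.Icc m M, e j)
    (hC : ∀ m, C m = (m : ℝ) * (1 - (m : ℝ) / ((M : ℝ) + 1)) * (A m - B m) ^ 2) :
    (∀ m, m₀ ≤ m → m < mstar →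
      A m = a ∧
      B m = (((mstar : ℝ) - m) * a + ((M : ℝ) - mstar + 1) * b) / ((M : ℝ) - m + 1) ∧
      |A m - B m| = |a - b| * ((M : ℝ) - mstar + 1) / ((M : ℝ) - m + 1)) ∧
    (∀ m m', m₀ ≤ m → m < m' → m' ≤ mstar → |A m - B m| < |A m' - B m'|) ∧
    (∀ m, mstar < m → m ≤ M - m₀ → |A m - B m| = |a - b| * (mstar : ℝ) / (m : ℝ)) ∧
    (∀ m m', mstar ≤ m → m < m' → m' ≤ M - m₀ → |A m' - B m'| < |A m - B m|) ∧
    (∀ m ∈ Finset.Icc m₀ (M - m₀), m ≠ mstar → C m < C mstar) := by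
  obtain rfl : A = prefixMean e := funext hA
  obtain rfl : B = suffixMean e M := funext hB
  obtain rfl : C = cusum e M := funext hC
  have he : IsStepAt e mstar a b := ⟨he1, he2⟩
  have hk₁ : 1 ≤ mstar := h1.trans h2
  have hkM : mstar ≤ M := h3.trans (Nat.sub_le M m₀)
  refine ⟨fun m hm hmk => ⟨?_, ?_, ?_⟩, fun m m' hm hmm' hm' => ?_, fun m hkm hm => ?_,
    fun m m' hkm hmm' hm' => ?_, fun m hm hmk => ?_⟩
  · exact he.prefixMean_of_le (h1.trans hm) hmk.le
  · exact he.suffixMean_of_le hmk.le (by omega)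
  · exact he.abs_prefixMean_sub_suffixMean_of_le (h1.trans hm) hmk.le hkM
  · exact he.strictMonoOn_abs_prefixMean_sub_suffixMean hab hkM ⟨by omega, by omega⟩
      ⟨by omega, hm'⟩ hmm'
  · exact he.abs_prefixMean_sub_suffixMean_of_ge (by omega) hkm.le (by omega)
  · exact he.strictAntiOn_abs_prefixMean_sub_suffixMean hab hk₁ ⟨hkm, by omega⟩
      ⟨by omega, by omega⟩ hmm'
  · rw [Finset.mem_Icc] at hm
    exact he.cusum_lt_cusum_of_ne hab hk₁ hkM (by omega) (by omega) hmk

/-- exact recovery of the change point of a noiseless step sequence by CUSUM.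
Explicit formulas for the mean gap on each side of `m*`, its strict monotonicity towards
`m*`, and unique maximization of the weighted statistic `C` at `m*`. -/
theorem stmt5 (M m₀ mstar : ℕ) (a b : ℝ) (hab : a ≠ b)
    (h1 : 1 ≤ m₀) (h2 : m₀ ≤ mstar) (h3 : mstar ≤ M - m₀) (h4 : 2 * m₀ ≤ M)
    (e A B C : ℕ → ℝ)
    (he1 : ∀ j, j < mstar → e j = a) (he2 : ∀ j, mstar ≤ j → e j = b)
    (hA : ∀ m, A m = (1 / (m : ℝ)) * ∑ j ∈ Finset.range m, e j)
    (hB : ∀ m, B m = (1 / ((M : ℝ) - m + 1)) * ∑ j ∈ Finset.Icc m M, e j)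
    (hC : ∀ m, C m = (m : ℝ) * (1 - (m : ℝ) / ((M : ℝ) + 1)) * (A m - B m) ^ 2) :
    (∀ m, m₀ ≤ m → m < mstar →
      A m = a ∧
      B m = (((mstar : ℝ) - m) * a + ((M : ℝ) - mstar + 1) * b) / ((M : ℝ) - m + 1) ∧
      |A m - B m| = |a - b| * ((M : ℝ) - mstar + 1) / ((M : ℝ) - m + 1)) ∧
    (∀ m m', m₀ ≤ m → m < m' → m' ≤ mstar → |A m - B m| < |A m' - B m'|) ∧
    (∀ m, mstar < m → m ≤ M - m₀ → |A m - B m| = |a - b| * (mstar : ℝ) / (m : ℝ)) ∧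
    (∀ m m', mstar ≤ m → m < m' → m' ≤ M - m₀ → |A m' - B m'| < |A m - B m|) ∧
    (∀ m ∈ Finset.Icc m₀ (M - m₀), m ≠ mstar → C m < C mstar) :=
  stmt5_general M m₀ mstar a b hab h1 h2 h3 e A B C he1 he2 hA hB hC
end

section
/- Let e : {0,…,M} → ℝ be a sequence of the form e_j = a + η_j for j < m* and e_j = b + η_j for j ≥ m*, with a ≠ b and noise bounded by |η_j| ≤ ε for all j. Let m̂ maximize C(m) = m(1−m/(M+1))(A_m − B_m)² over m ∈ {m₀,…,M−m₀} where A_m, B_m are the pre/post means. If ε < |a−b|·c for a suitable explicit constant c depending on m₀, m*, and M (for instance ε < |a−b|/8 when m₀ ≤ m* ≤ M−m₀ and the weight ratios are controlled), then |A_m − B_m| at m = m* exceeds |A_m − B_m| at any m with |m − m*| large enough that the noiseless gap formula drops below |a−b| − 4ε; hence the estimator localizes the change point: the noiseless gap at m̂ satisfies |a−b|·min(m*/m̂, (M−m*+1)/(M−m̂+1)) ≥ |a−b| − 4ε (taking the appropriate side). -/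
/-!
Averaging a noisy window moves its mean by at most `ε`, so `A_m - B_m` is within `2ε` of the
noiseless gap `(a - b) * min (m*/m) ((M - m* + 1)/(M - m + 1))`, which equals `a - b` at
`m = m*`. Hence `|a - b| - 2ε ≤ |A_{m*} - B_{m*}| ≤ |A_m̂ - B_m̂|`, and the right-hand side is at
most the noiseless gap at `m̂` plus `2ε`.
-/

open Finset

lemma abs_one_div_card_mul_sum_le {ι : Type*} {s : Finset ι} (hs : s.Nonempty) {f : ι → ℝ}
    {ε : ℝ} (hf : ∀ i ∈ s, |f i| ≤ ε) : |(1 / (#s : ℝ)) * ∑ i ∈ s, f i| ≤ ε := by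
  have hcard : (0 : ℝ) < #s := by exact_mod_cast hs.card_pos
  rw [abs_mul, abs_of_pos (by positivity), one_div, inv_mul_le_iff₀ hcard]
  calc |∑ i ∈ s, f i| ≤ ∑ i ∈ s, |f i| := abs_sum_le_sum_abs _ _
    _ ≤ #s * ε := by simpa using sum_le_card_nsmul s _ ε hf

lemma sum_ite_eq_card_mul_add {ι : Type*} (s : Finset ι) (p : ι → Prop) [DecidablePred p]
    (a b : ℝ) : ∑ i ∈ s, (if p i then a else b) = #s * b + #{i ∈ s | p i} * (a - b) := by
  rw [sum_ite, sum_const, sum_const, ← card_filter_add_card_filter_not (s := s) p]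
  push_cast
  ring

lemma card_filter_range_lt (m k : ℕ) : #{j ∈ range m | j < k} = min m k := by
  rw [show {j ∈ range m | j < k} = range (min m k) by ext; simp, card_range]

lemma card_filter_Icc_lt {m M k : ℕ} (hk : k ≤ M + 1) : #{j ∈ Icc m M | j < k} = k - m := by
  rw [show {j ∈ Icc m M | j < k} = Ico m k by ext; simp; omega, Nat.card_Ico]

lemma abs_mean_sub_step_mean_le {s : Finset ℕ} (hs : s.Nonempty) {mstar : ℕ} {a b ε : ℝ}
    {η e : ℕ → ℝ} (hη : ∀ j, |η j| ≤ ε) (he : ∀ j, e j = (if j < mstar then a else b) + η j) :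
    |(1 / (#s : ℝ)) * ∑ j ∈ s, e j - (b + (a - b) * (#{j ∈ s | j < mstar} / #s))| ≤ ε := by
  have hcard : (#s : ℝ) ≠ 0 := by exact_mod_cast hs.card_pos.ne'
  have hnoise : (1 / (#s : ℝ)) * ∑ j ∈ s, e j - (b + (a - b) * (#{j ∈ s | j < mstar} / #s))
      = (1 / (#s : ℝ)) * ∑ j ∈ s, η j := by
    simp only [he, sum_add_distrib, sum_ite_eq_card_mul_add]
    field_simp
    ring
  rw [hnoise]
  exact abs_one_div_card_mul_sum_le hs fun j _ => hη j

lemma min_div_sub_div_eq_min {M mstar m : ℕ} (hm : 0 < m) (hmM : m ≤ M) (hsM : mstar ≤ M) :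
    ((min m mstar : ℕ) : ℝ) / m - ((mstar - m : ℕ) : ℝ) / ((M : ℝ) - m + 1)
      = min ((mstar : ℝ) / m) (((M : ℝ) - mstar + 1) / ((M : ℝ) - m + 1)) := by
  have hm' : (0 : ℝ) < m := by exact_mod_cast hm
  have hD : (0 : ℝ) < (M : ℝ) - m + 1 := by
    have : (m : ℝ) ≤ M := by exact_mod_cast hmM
    linarith
  rcases le_total m mstar with h | h
  · have h' : (m : ℝ) ≤ mstar := by exact_mod_cast h
    rw [min_eq_left h, Nat.cast_sub h, div_self hm'.ne', min_eq_right]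
    · field_simp
      ring
    · calc ((M : ℝ) - mstar + 1) / ((M : ℝ) - m + 1) ≤ 1 := by
            rw [div_le_one hD]; linarith
        _ ≤ mstar / m := by rwa [one_le_div hm']
  · have h' : (mstar : ℝ) ≤ m := by exact_mod_cast h
    have hs : (mstar : ℝ) ≤ M := by exact_mod_cast hsM
    rw [min_eq_right h, Nat.sub_eq_zero_of_le h, Nat.cast_zero, zero_div, sub_zero, min_eq_left]
    calc (mstar : ℝ) / m ≤ 1 := by rwa [div_le_one hm']
      _ ≤ ((M : ℝ) - mstar + 1) / ((M : ℝ) - m + 1) := by rw [one_le_div hD]; linarith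

lemma abs_mean_diff_sub_step_gap_le {M mstar m : ℕ} {a b ε : ℝ} {η e A B : ℕ → ℝ} (hη : ∀ j, |η j| ≤ ε)
    (he : ∀ j, e j = (if j < mstar then a else b) + η j)
    (hA : A m = (1 / (m : ℝ)) * ∑ j ∈ range m, e j)
    (hB : B m = (1 / ((M : ℝ) - m + 1)) * ∑ j ∈ Icc m M, e j)
    (hm : 1 ≤ m) (hmM : m ≤ M) (hsM : mstar ≤ M) :
    |A m - B m - (a - b) * min ((mstar : ℝ) / m) (((M : ℝ) - mstar + 1) / ((M : ℝ) - m + 1))|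
      ≤ 2 * ε := by
  have hcardIcc : (#(Icc m M) : ℝ) = M - m + 1 := by
    rw [Nat.card_Icc, Nat.cast_sub (by omega)]
    push_cast
    ring
  have hAm := abs_mean_sub_step_mean_le (s := range m) (nonempty_range_iff.mpr (by omega)) hη he
  have hBm := abs_mean_sub_step_mean_le (s := Icc m M) (nonempty_Icc.mpr hmM) hη he
  rw [card_range, card_filter_range_lt, ← hA] at hAm
  rw [hcardIcc, card_filter_Icc_lt (by omega), ← hB] at hBm
  set pA : ℝ := b + (a - b) * ((min m mstar : ℕ) / m)
  set pB : ℝ := b + (a - b) * ((mstar - m : ℕ) / ((M : ℝ) - m + 1))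
  calc _ = |(A m - pA) - (B m - pB)| := by
        rw [← min_div_sub_div_eq_min hm hmM hsM]
        congr 1
        simp only [pA, pB]
        ring
    _ ≤ ε + ε := (abs_sub _ _).trans (add_le_add hAm hBm)
    _ = 2 * ε := by ring

theorem stmt17_general (M m₀ mstar mhat : ℕ) (a b ε : ℝ)
    (h1 : 1 ≤ m₀) (h2 : m₀ ≤ mstar) (h3 : mstar ≤ M - m₀)
    (η e A B : ℕ → ℝ)
    (hη : ∀ j, |η j| ≤ ε)
    (he : ∀ j, e j = (if j < mstar then a else b) + η j)
    (hA : ∀ m, A m = (1 / (m : ℝ)) * ∑ j ∈ Finset.range m, e j)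
    (hB : ∀ m, B m = (1 / ((M : ℝ) - m + 1)) * ∑ j ∈ Finset.Icc m M, e j)
    (hmem : mhat ∈ Finset.Icc m₀ (M - m₀))
    (hmax : ∀ m ∈ Finset.Icc m₀ (M - m₀), |A m - B m| ≤ |A mhat - B mhat|) :
    |a - b| - 4 * ε ≤
      |a - b| * min ((mstar : ℝ) / (mhat : ℝ))
        (((M : ℝ) - mstar + 1) / ((M : ℝ) - mhat + 1)) := by
  obtain ⟨hlo, hhi⟩ := mem_Icc.mp hmem
  have hsM : mstar ≤ M := by omega
  have hstar := abs_mean_diff_sub_step_gap_le hη he (hA mstar) (hB mstar) (h1.trans h2) hsM hsM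
  have hhat := abs_mean_diff_sub_step_gap_le hη he (hA mhat) (hB mhat) (h1.trans hlo) (by omega) hsM
  have hs : (0 : ℝ) < mstar := by exact_mod_cast h1.trans h2
  have hsM' : (mstar : ℝ) ≤ M := by exact_mod_cast hsM
  have hhM' : (mhat : ℝ) ≤ M := by exact_mod_cast (by omega : mhat ≤ M)
  rw [div_self hs.ne', div_self (by linarith), min_self, mul_one] at hstar
  set g := min ((mstar : ℝ) / mhat) (((M : ℝ) - mstar + 1) / ((M : ℝ) - mhat + 1))
  have hg : 0 ≤ g := le_min (by positivity) (div_nonneg (by linarith) (by linarith))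
  calc |a - b| - 4 * ε ≤ |A mstar - B mstar| - 2 * ε := by
        linarith [abs_sub_abs_le_abs_sub (a - b) (A mstar - B mstar),
          abs_sub_comm (a - b) (A mstar - B mstar)]
    _ ≤ |A mhat - B mhat| - 2 * ε := by linarith [hmax mstar (mem_Icc.mpr ⟨h2, h3⟩)]
    _ ≤ |(a - b) * g| := by linarith [abs_sub_abs_le_abs_sub (A mhat - B mhat) ((a - b) * g)]
    _ = |a - b| * g := by rw [abs_mul, abs_of_nonneg hg]

/-- robustness of CUSUM change-point localization under bounded noise.
For a step sequence `a`/`b` with jump at `m*` contaminated by noise bounded by `ε`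
(`ε < |a−b|/8`), any maximizer `m̂` of the mean gap `|A_m − B_m|` over
`{m₀,…,M−m₀}` satisfies the localization inequality
`|a−b|·min(m*/m̂, (M−m*+1)/(M−m̂+1)) ≥ |a−b| − 4ε`. -/
theorem stmt17 (M m₀ mstar mhat : ℕ) (a b ε : ℝ) (hab : a ≠ b)
    (hε0 : 0 ≤ ε) (hε8 : ε < |a - b| / 8)
    (h1 : 1 ≤ m₀) (h2 : m₀ ≤ mstar) (h3 : mstar ≤ M - m₀) (h4 : 2 * m₀ ≤ M)
    (η e A B : ℕ → ℝ)
    (hη : ∀ j, |η j| ≤ ε)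
    (he : ∀ j, e j = (if j < mstar then a else b) + η j)
    (hA : ∀ m, A m = (1 / (m : ℝ)) * ∑ j ∈ Finset.range m, e j)
    (hB : ∀ m, B m = (1 / ((M : ℝ) - m + 1)) * ∑ j ∈ Finset.Icc m M, e j)
    (hmem : mhat ∈ Finset.Icc m₀ (M - m₀))
    (hmax : ∀ m ∈ Finset.Icc m₀ (M - m₀), |A m - B m| ≤ |A mhat - B mhat|) :
    |a - b| - 4 * ε ≤
      |a - b| * min ((mstar : ℝ) / (mhat : ℝ))
        (((M : ℝ) - mstar + 1) / ((M : ℝ) - mhat + 1)) :=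
  stmt17_general M m₀ mstar mhat a b ε h1 h2 h3 η e A B hη he hA hB hmem hmax
end
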